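/- arXiv:2408.12544 — 2 statements merged into one kernel-verified Lean document; each statement's English description precedes it below -/
import Mathlib

section
/- For n ≥ 3 and i ≥ 2, the number c_{n,i} of independent sets of size i in the cycle C_n satisfies i · c_{n,i} = n · p_{n-3, i-1}, where p_{m,j} is the number of independent sets of size j in the path P_m. -/
/-! Double count the pairs `(v, s)` with `s` an independent `i`-set of `C_n` and `v ∈ s`: this gives
`i · c_{n,i} = ∑_v #{s ∋ v}`. Rotations of the cycle make all `n` terms equal to the one for
`v = 0`, and an independent set containing `0` is `0` together with an independent `(i-1)`-set
avoiding `0` and its two neighbours, that is, of the path `2, …, n-2` on `n - 3` vertices. -/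

open Finset SimpleGraph

noncomputable def numIndep {V : Type*} [Fintype V] (G : SimpleGraph V) (i : ℕ) : ℕ :=
  Set.ncard {s : Finset V | s.card = i ∧ ∀ a ∈ s, ∀ b ∈ s, ¬ G.Adj a b}

noncomputable def indepNum {V : Type*} [Fintype V] (G : SimpleGraph V) : ℕ :=
  sSup {i | ∃ s : Finset V, s.card = i ∧ ∀ a ∈ s, ∀ b ∈ s, ¬ G.Adj a b}

namespace SimpleGraph

variable {V W : Type*} {G : SimpleGraph V} {H : SimpleGraph W}

theorem isIndepSet_coe_iff {s : Finset V} :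
    G.IsIndepSet (s : Set V) ↔ ∀ a ∈ s, ∀ b ∈ s, ¬ G.Adj a b :=
  ⟨fun h _ ha _ hb hab => h ha hb hab.ne hab, fun h _ ha _ hb _ => h _ ha _ hb⟩

theorem numIndep_eq_card_indepSetFinset [Fintype V] [DecidableEq V] [DecidableRel G.Adj]
    (i : ℕ) : numIndep G i = #(G.indepSetFinset i) := by
  rw [numIndep, ← Set.ncard_coe_finset]
  congr 1
  ext s
  simp [isNIndepSet_iff, isIndepSet_coe_iff, and_comm]

theorem Embedding.isNIndepSet_map_iff (f : G ↪g H) {n : ℕ} {s : Finset V} :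
    H.IsNIndepSet n (s.map f.toEmbedding) ↔ G.IsNIndepSet n s := by
  simp only [isNIndepSet_iff, isIndepSet_coe_iff, card_map, forall_mem_map,
    RelEmbedding.coe_toEmbedding, f.map_adj_iff]

theorem Embedding.isNIndepSet_insert_map_iff [DecidableEq V] (f : H ↪g G) {v : V}
    (hf : ∀ x, f x ≠ v ∧ ¬ G.Adj v (f x)) {k : ℕ} {t : Finset W} :
    G.IsNIndepSet (k + 1) (insert v (t.map f.toEmbedding)) ↔ H.IsNIndepSet k t := by
  have hv : v ∉ t.map f.toEmbedding := by simpa using fun x _ => (hf x).1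
  rw [← f.isNIndepSet_map_iff]
  simp only [isNIndepSet_iff, isIndepSet_coe_iff, card_insert_of_notMem hv, forall_mem_insert]
  have hnadj : ∀ x ∈ t.map f.toEmbedding, ¬ G.Adj v x := by simpa using fun x _ => (hf x).2
  have hnadj' : ∀ x ∈ t.map f.toEmbedding, ¬ G.Adj x v := fun x hx h => hnadj x hx h.symm
  simp +contextual only [hnadj, hnadj', G.loopless.irrefl v, not_false_eq_true, implies_true,
    true_and, Nat.add_right_cancel_iff]

theorem Embedding.card_filter_mem_indepSetFinset_succ [Fintype V] [DecidableEq V]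
    [DecidableRel G.Adj] [Fintype W] [DecidableEq W] [DecidableRel H.Adj] (f : H ↪g G) {v : V}
    (hf : Set.range f = {w | w ≠ v ∧ ¬ G.Adj v w}) (k : ℕ) :
    #{s ∈ G.indepSetFinset (k + 1) | v ∈ s} = #(H.indepSetFinset k) := by
  have hfv : ∀ x, f x ≠ v ∧ ¬ G.Adj v (f x) := fun x => hf.subset ⟨x, rfl⟩
  have hv : ∀ t : Finset W, v ∉ t.map f.toEmbedding := fun t => by
    simpa using fun x _ => (hfv x).1
  symm
  refine card_bij (fun t _ => insert v (t.map f.toEmbedding)) ?_ ?_ ?_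
  · intro t ht
    simp only [mem_filter, mem_indepSetFinset_iff] at ht ⊢
    exact ⟨(f.isNIndepSet_insert_map_iff hfv).2 ht, mem_insert_self _ _⟩
  · intro t₁ _ t₂ _ h
    simpa [erase_insert (hv _)] using congrArg (·.erase v) h
  · intro s hs
    simp only [mem_filter, mem_indepSetFinset_iff] at hs
    obtain ⟨hind, hvs⟩ := hs
    have hrange : s.erase v ⊆ univ.map f.toEmbedding := by
      intro w hw
      rw [mem_erase] at hw
      have : w ∈ Set.range f := hf ▸ ⟨hw.1, hind.isIndepSet hvs hw.2 hw.1.symm⟩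
      simpa using this
    obtain ⟨t, -, ht⟩ := subset_map_iff.1 hrange
    have hs : insert v (t.map f.toEmbedding) = s := by rw [← ht, insert_erase hvs]
    exact ⟨t, mem_indepSetFinset_iff.2 ((f.isNIndepSet_insert_map_iff hfv).1 (hs ▸ hind)), hs⟩

theorem Iso.card_filter_mem_indepSetFinset [Fintype V] [DecidableEq V] [DecidableRel G.Adj]
    [Fintype W] [DecidableEq W] [DecidableRel H.Adj] (e : G ≃g H) (v : V) (i : ℕ) :
    #{s ∈ H.indepSetFinset i | e v ∈ s} = #{s ∈ G.indepSetFinset i | v ∈ s} := by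
  symm
  refine card_nbij' (·.map e.toEmbedding.toEmbedding) (·.map e.symm.toEmbedding.toEmbedding)
    ?_ ?_ ?_ ?_
  · intro s hs
    simp only [coe_filter, Set.mem_ofPred_eq, mem_indepSetFinset_iff] at hs ⊢
    exact ⟨e.toEmbedding.isNIndepSet_map_iff.2 hs.1, mem_map_of_mem _ hs.2⟩
  · intro s hs
    simp only [coe_filter, Set.mem_ofPred_eq, mem_indepSetFinset_iff] at hs ⊢
    exact ⟨e.symm.toEmbedding.isNIndepSet_map_iff.2 hs.1,
      mem_map.2 ⟨e v, hs.2, e.symm_apply_apply v⟩⟩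
  all_goals
    intro s _
    dsimp only
    rw [Finset.map_map]
    convert map_refl
    ext
    simp

theorem mul_card_indepSetFinset_eq_of_forall_iso [Fintype V] [DecidableEq V]
    [DecidableRel G.Adj] (v : V) (hG : ∀ w, ∃ e : G ≃g G, e v = w) (i : ℕ) :
    i * #(G.indepSetFinset i) = Fintype.card V * #{s ∈ G.indepSetFinset i | v ∈ s} := by
  have hcount : ∀ w, #{s ∈ G.indepSetFinset i | w ∈ s} = #{s ∈ G.indepSetFinset i | v ∈ s} := by
    intro w
    obtain ⟨e, rfl⟩ := hG w
    exact e.card_filter_mem_indepSetFinset v i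
  calc i * #(G.indepSetFinset i) = ∑ s ∈ G.indepSetFinset i, #s := by
        rw [sum_congr rfl fun s hs => (mem_indepSetFinset_iff.1 hs).card_eq, sum_const,
          smul_eq_mul, mul_comm]
    _ = _ := sum_card hcount

theorem cycleGraph_adj_iff_val {n : ℕ} {u v : Fin (n + 2)} :
    (cycleGraph (n + 2)).Adj u v ↔
      u.val + 1 = v.val ∨ v.val + 1 = u.val ∨ u.val + (n + 1) = v.val ∨
        v.val + (n + 1) = u.val := by
  have := u.isLt
  have := v.isLt
  rw [cycleGraph_adj']
  rcases lt_trichotomy u v with h | rfl | h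
  · rw [Fin.coe_sub_iff_lt.2 h, Fin.coe_sub_iff_le.2 h.le]
    rw [Fin.lt_def] at h
    omega
  · simp
  · rw [Fin.coe_sub_iff_lt.2 h, Fin.coe_sub_iff_le.2 h.le]
    rw [Fin.lt_def] at h
    omega

def cycleGraph.rotation {n : ℕ} [NeZero n] (c : Fin n) : cycleGraph n ≃g cycleGraph n where
  toEquiv := Equiv.addRight c
  map_rel_iff' := by simp [cycleGraph_adj']

def pathGraphEmbeddingCycleGraph (m : ℕ) : pathGraph m ↪g cycleGraph (m + 3) where
  toFun x := ⟨x + 2, by omega⟩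
  inj' x y h := by simpa [Fin.ext_iff] using h
  map_rel_iff' {x y} := by
    change (cycleGraph (m + 3)).Adj ⟨x + 2, _⟩ ⟨y + 2, _⟩ ↔ _
    rw [cycleGraph_adj_iff_val, pathGraph_adj]
    dsimp only
    omega

@[simp]
theorem pathGraphEmbeddingCycleGraph_apply_val {m : ℕ} (x : Fin m) :
    (pathGraphEmbeddingCycleGraph m x).val = x.val + 2 :=
  rfl

theorem range_pathGraphEmbeddingCycleGraph (m : ℕ) :
    Set.range (pathGraphEmbeddingCycleGraph m) = {w | w ≠ 0 ∧ ¬ (cycleGraph (m + 3)).Adj 0 w} := by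
  ext w
  simp only [Set.mem_range, Set.mem_ofPred_eq, ne_eq, Fin.ext_iff, cycleGraph_adj_iff_val,
    pathGraphEmbeddingCycleGraph_apply_val, Fin.val_zero]
  constructor
  · rintro ⟨x, hx⟩
    omega
  · intro h
    exact ⟨⟨w - 2, by omega⟩, by simp only; omega⟩

end SimpleGraph

theorem stmt_4 (n i : ℕ) (hn : 3 ≤ n) (hi : 2 ≤ i) :
    i * numIndep (cycleGraph n) i = n * numIndep (pathGraph (n - 3)) (i - 1) := by
  classical
  obtain ⟨m, rfl⟩ : ∃ m, n = m + 3 := ⟨n - 3, by omega⟩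
  obtain ⟨k, rfl⟩ : ∃ k, i = k + 1 := ⟨i - 1, by omega⟩
  rw [Nat.add_sub_cancel, Nat.add_sub_cancel, numIndep_eq_card_indepSetFinset,
    numIndep_eq_card_indepSetFinset,
    mul_card_indepSetFinset_eq_of_forall_iso 0 fun w => ⟨cycleGraph.rotation w, zero_add w⟩,
    Fintype.card_fin, (pathGraphEmbeddingCycleGraph m).card_filter_mem_indepSetFinset_succ
      (range_pathGraphEmbeddingCycleGraph m)]
end

section
/- Define T_n = ∑_{j=1}^{⌈n/2⌉} (-1)^{j-1} · j · C(n-j+1, j). Then for all n ≥ 1, T_n + 2·T_{n+3} + T_{n+6} = 0. -/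
open Finset

/-- `T n = ∑_{j=1}^{⌈n/2⌉} (-1)^{j-1} j C(n-j+1, j)`. -/
def TAlt (n : ℕ) : ℤ :=
  ∑ j ∈ Finset.Icc 1 ((n + 1) / 2), (-1 : ℤ) ^ (j - 1) * j * ((n - j + 1).choose j)

def wT (j : ℕ) : ℤ := (-1) ^ (j - 1) * j
def wU (j : ℕ) : ℤ := (-1) ^ (j - 1)

def SAlt (w : ℕ → ℤ) (n : ℕ) : ℤ :=
  ∑ j ∈ Finset.Icc 1 ((n + 1) / 2), w j * ((n - j + 1).choose j : ℤ)

lemma TAlt_eq (n : ℕ) : TAlt n = SAlt wT n := by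
  unfold TAlt SAlt wT
  rfl

lemma icc_to_range (f : ℕ → ℤ) (M : ℕ) :
    ∑ j ∈ Icc 1 M, f j = ∑ i ∈ range M, f (1 + i) := by
  rw [← Finset.Ico_add_one_right_eq_Icc, Finset.sum_Ico_eq_sum_range]
  norm_num

lemma sum_ext (w : ℕ → ℤ) (n M : ℕ) (hn : 1 ≤ n) (hM : (n + 1) / 2 ≤ M) :
    ∑ j ∈ Icc 1 M, w j * ((n - j + 1).choose j : ℤ) = SAlt w n := by
  refine (Finset.sum_subset (Finset.Icc_subset_Icc_right hM) ?_).symm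
  intro j hj hj'
  simp only [mem_Icc] at hj hj'
  have : (n - j + 1).choose j = 0 := Nat.choose_eq_zero_of_lt (by omega)
  simp [this]

lemma S_rec (w : ℕ → ℤ) (n : ℕ) (hn : 1 ≤ n) :
    SAlt w (n + 2) = SAlt w (n + 1) + w 1
      + ∑ i ∈ Finset.range ((n + 1) / 2), w (i + 2) * ((n - (i + 1) + 1).choose (i + 1) : ℤ) := by
  have pascal : SAlt w (n + 2)
      = ∑ j ∈ Icc 1 ((n + 3) / 2), w j * ((n + 1 - j + 1).choose j : ℤ)
        + ∑ i ∈ Finset.range ((n + 3) / 2), w (1 + i) * ((n - i + 1).choose i : ℤ) := by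
    unfold SAlt
    have hM : (n + 2 + 1) / 2 = (n + 3) / 2 := rfl
    rw [hM, icc_to_range, icc_to_range, ← Finset.sum_add_distrib]
    refine Finset.sum_congr rfl fun i hi => ?_
    simp only [mem_range] at hi
    have e1 : n + 2 - (1 + i) + 1 = (n + 1 - i) + 1 := by omega
    have e2 : n + 1 - (1 + i) + 1 = n + 1 - i := by omega
    have e3 : n - i + 1 = n + 1 - i := by omega
    have e4 : (1 : ℕ) + i = i + 1 := by omega
    rw [e1, e2, e3, e4, Nat.choose_succ_succ']
    push_cast
    ring
  rw [pascal, sum_ext w (n + 1) _ (by omega) (by omega)]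
  have hsplit : (n + 3) / 2 = (n + 1) / 2 + 1 := by omega
  rw [hsplit, Finset.sum_range_succ']
  have h0 : w (1 + 0) * ((n - 0 + 1).choose 0 : ℤ) = w 1 := by norm_num
  rw [h0]
  have : ∀ i ∈ Finset.range ((n + 1) / 2),
      w (1 + (i + 1)) * ((n - (i + 1) + 1).choose (i + 1) : ℤ)
        = w (i + 2) * ((n - (i + 1) + 1).choose (i + 1) : ℤ) := by
    intro i _
    have : 1 + (i + 1) = i + 2 := by omega
    rw [this]
  rw [Finset.sum_congr rfl this]
  ring

lemma S_to_range (w : ℕ → ℤ) (n : ℕ) :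
    SAlt w n = ∑ i ∈ Finset.range ((n + 1) / 2), w (i + 1) * ((n - (i + 1) + 1).choose (i + 1) : ℤ) := by
  unfold SAlt
  rw [icc_to_range]
  refine Finset.sum_congr rfl fun i hi => ?_
  have : 1 + i = i + 1 := by omega
  rw [this]

lemma TAlt_rec (n : ℕ) (hn : 1 ≤ n) :
    TAlt (n + 2) = TAlt (n + 1) + 1 - TAlt n - SAlt wU n := by
  have h := S_rec wT n hn
  rw [TAlt_eq, TAlt_eq, TAlt_eq, h]
  have hw1 : wT 1 = 1 := by norm_num [wT]
  have htail : ∑ i ∈ Finset.range ((n + 1) / 2), wT (i + 2) * ((n - (i + 1) + 1).choose (i + 1) : ℤ)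
      = -(SAlt wT n + SAlt wU n) := by
    rw [S_to_range wT n, S_to_range wU n, ← Finset.sum_add_distrib, ← Finset.sum_neg_distrib]
    refine Finset.sum_congr rfl fun i hi => ?_
    simp only [wT, wU]
    have e1 : i + 2 - 1 = i + 1 := by omega
    have e2 : i + 1 - 1 = i := by omega
    rw [e1, e2]
    push_cast
    ring
  rw [htail, hw1]
  ring

lemma UAlt_rec (n : ℕ) (hn : 1 ≤ n) :
    SAlt wU (n + 2) = SAlt wU (n + 1) + 1 - SAlt wU n := by
  have h := S_rec wU n hn
  rw [h]
  have hw1 : wU 1 = 1 := by norm_num [wU]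
  have htail : ∑ i ∈ Finset.range ((n + 1) / 2), wU (i + 2) * ((n - (i + 1) + 1).choose (i + 1) : ℤ)
      = -(SAlt wU n) := by
    rw [S_to_range wU n, ← Finset.sum_neg_distrib]
    refine Finset.sum_congr rfl fun i hi => ?_
    simp only [wU]
    have e1 : i + 2 - 1 = i + 1 := by omega
    have e2 : i + 1 - 1 = i := by omega
    rw [e1, e2]
    ring
  rw [htail, hw1]
  ring

lemma TAlt_rec4 (n : ℕ) (hn : 1 ≤ n) :
    TAlt (n + 4) = 2 * TAlt (n + 3) - 3 * TAlt (n + 2) + 2 * TAlt (n + 1) - TAlt n := by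
  have h0 := TAlt_rec n hn
  have h1 := TAlt_rec (n + 1) (by omega)
  have h2 := TAlt_rec (n + 2) (by omega)
  have hu := UAlt_rec n hn
  linarith

lemma W4 : ∀ k : ℕ,
    (TAlt (k + 1) + 2 * TAlt (k + 4) + TAlt (k + 7) = 0) ∧
    (TAlt (k + 2) + 2 * TAlt (k + 5) + TAlt (k + 8) = 0) ∧
    (TAlt (k + 3) + 2 * TAlt (k + 6) + TAlt (k + 9) = 0) ∧
    (TAlt (k + 4) + 2 * TAlt (k + 7) + TAlt (k + 10) = 0) := by
  intro k
  induction k with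
  | zero => refine ⟨?_, ?_, ?_, ?_⟩ <;> decide
  | succ k ih =>
    obtain ⟨h1, h2, h3, h4⟩ := ih
    have r1 := TAlt_rec4 (k + 1) (by omega)
    have r2 := TAlt_rec4 (k + 4) (by omega)
    have r3 := TAlt_rec4 (k + 7) (by omega)
    refine ⟨by linarith, by linarith, by linarith, ?_⟩
    have r1' := TAlt_rec4 (k + 2) (by omega)
    have r2' := TAlt_rec4 (k + 5) (by omega)
    have r3' := TAlt_rec4 (k + 8) (by omega)
    linarith

theorem stmt_11 (n : ℕ) (hn : 1 ≤ n) :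
    TAlt n + 2 * TAlt (n + 3) + TAlt (n + 6) = 0 := by
  have h := (W4 (n - 1)).1
  have e1 : n - 1 + 1 = n := by omega
  have e2 : n - 1 + 4 = n + 3 := by omega
  have e3 : n - 1 + 7 = n + 6 := by omega
  rw [e1, e2, e3] at h
  exact h
end
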